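/- For all p, q ≥ 0, FN^(p) ⋄ FN^(q) ⊆ FN^(p+q); that is, the product ⋄ on FN(X) respects the grading by degree. -/

import Mathlib

open scoped TensorProduct

universe u v w

/-- Letters of bracketed words in `X`: either a variable from `X` or a bracket
`⌊u⌋` enclosing a (bracketed) word `u`. Lists of letters are exactly the bracketed
words, i.e. the elements of the free operated monoid `𝔐(X)`. -/
inductive Lt (X : Type u) : Type u
  | var : X → Lt X
  | brk : List (Lt X) → Lt X

namespace Nij

noncomputable section

variable {X : Type u}

/-- Two letters may be adjacent in an "alternating" word iff they are not both brackets. -/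
def altP : Lt X → Lt X → Prop
  | Lt.brk _, Lt.brk _ => False
  | _, _ => True

/-- A letter is good (i.e. lies in `X ⊔ ⌊𝔛_∞⌋`) if each bracket encloses a word whose
letters are good and in which no two consecutive letters are brackets. -/
inductive GoodL : Lt X → Prop
  | var (x : X) : GoodL (Lt.var x)
  | brk (u : List (Lt X)) (h1 : ∀ a ∈ u, GoodL a) (h2 : List.Chain' altP u) :
      GoodL (Lt.brk u)

/-- The words in `𝔛_∞`: all letters good and no two consecutive brackets. -/
def GoodW (w : List (Lt X)) : Prop := (∀ a ∈ w, GoodL a) ∧ List.Chain' altP w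

/-- The set `𝔛_∞` of basis words of the free Nijenhuis algebra. -/
def NW (X : Type u) : Type u := {w : List (Lt X) // GoodW w}

/-- The free Nijenhuis algebra `FN(X) = k𝔛_∞` as a `k`-module. -/
abbrev FN (k : Type v) [CommRing k] (X : Type u) : Type (max u v) := NW X →₀ k

/-- The empty word `1 ∈ 𝔛_∞`. -/
def one : NW X := ⟨[], ⟨by simp, List.isChain_nil⟩⟩

/-- A single good letter forms a good word. -/
lemma goodW_singleton {a : Lt X} (h : GoodL a) : GoodW [a] := by
  constructor
  · intro b hb
    rw [List.mem_singleton] at hb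
    exact hb ▸ h
  · exact List.isChain_singleton _

/-- The single-letter word `x ∈ 𝔛_∞` for `x ∈ X`. -/
def varW (x : X) : NW X := ⟨[Lt.var x], goodW_singleton (GoodL.var x)⟩

/-- The word `⌊w⌋ ∈ 𝔛_∞` for `w ∈ 𝔛_∞`. -/
def NopW (w : NW X) : NW X := ⟨[Lt.brk w.1], goodW_singleton (GoodL.brk _ w.2.1 w.2.2)⟩

/-- The single-letter word `[a] ∈ 𝔛_∞` for a good letter `a ∈ X ⊔ ⌊𝔛_∞⌋`. -/
def letterW (a : Lt X) (h : GoodL a) : NW X := ⟨[a], goodW_singleton h⟩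

variable (k : Type v) [CommRing k]

/-- The basis element of `FN(X)` corresponding to `w ∈ 𝔛_∞`. -/
def bw (w : NW X) : FN k X := Finsupp.single w 1

/-- The Nijenhuis operator `N_X` on `FN(X)`, the linear extension of `w ↦ ⌊w⌋`. -/
def Nop : FN k X →ₗ[k] FN k X := Finsupp.lmapDomain k k NopW

/-- The natural linear embedding `k𝔛_∞ → k𝔐(X)` into the monoid algebra of the free
monoid of bracketed words, used to express concatenation of words linearly. -/
def iota : FN k X →ₗ[k] MonoidAlgebra k (FreeMonoid (Lt X)) :=
  (MonoidAlgebra.coeffLinearEquiv k).symm.toLinearMap ∘ₗ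
    Finsupp.lmapDomain k k (fun w : NW X => FreeMonoid.ofList w.1)

/-- The left counit `ε : FN(X) → k`, `ε(1) = 1` and `ε(w) = 0` for `1 ≠ w ∈ 𝔛_∞`. -/
def eps : FN k X →ₗ[k] k := Finsupp.lapply one

/-- A specification of the product `⋄` on `FN(X) = k𝔛_∞`: a `k`-bilinear map satisfying
the defining recursive equations of the paper. These equations determine `⋄` uniquely.

* `concat`: if the last letter of `u` and the first letter of `v` are not both brackets
  (in particular if `u` or `v` is empty), then `u ⋄ v` is the concatenation `uv`.
* `brkbrk`: `⌊ū⌋ ⋄ ⌊v̄⌋ = ⌊ū ⋄ ⌊v̄⌋⌋ + ⌊⌊ū⌋ ⋄ v̄⌋ − ⌊⌊ū ⋄ v̄⌋⌋`.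
* `split`: if `u = u₀a` and `v = bv₀` then `u ⋄ v = u₀ (a ⋄ b) v₀`, the outer products
  being concatenation (expressed in the monoid algebra `k𝔐(X)` via `iota`). -/
structure DiamondSpec (k : Type v) (X : Type u) [CommRing k] where
  mul : FN k X →ₗ[k] FN k X →ₗ[k] FN k X
  concat : ∀ u v : NW X,
    (¬ ∃ (a b : List (Lt X)), u.1.getLast? = some (Lt.brk a) ∧ v.1.head? = some (Lt.brk b)) →
    iota k (mul (bw k u) (bw k v)) = iota k (bw k u) * iota k (bw k v)
  brkbrk : ∀ u v : NW X,
    mul (Nop k (bw k u)) (Nop k (bw k v)) =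
      Nop k (mul (bw k u) (Nop k (bw k v))) + Nop k (mul (Nop k (bw k u)) (bw k v))
        - Nop k (Nop k (mul (bw k u) (bw k v)))
  split : ∀ (u v : NW X) (u₀ v₀ : List (Lt X)) (a b : Lt X)
      (ha : GoodW [a]) (hb : GoodW [b]),
      u.1 = u₀ ++ [a] → v.1 = b :: v₀ →
      iota k (mul (bw k u) (bw k v)) =
        MonoidAlgebra.of k (FreeMonoid (Lt X)) (FreeMonoid.ofList u₀) *
          iota k (mul (bw k ⟨[a], ha⟩) (bw k ⟨[b], hb⟩)) *
          MonoidAlgebra.of k (FreeMonoid (Lt X)) (FreeMonoid.ofList v₀)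

/-- The componentwise product on `FN(X) ⊗ FN(X)` induced by `⋄`:
`(a ⊗ b) ⋄ (c ⊗ d) = (a ⋄ c) ⊗ (b ⋄ d)`. -/
def mul2 (d : DiamondSpec k X) :
    (FN k X ⊗[k] FN k X) →ₗ[k] (FN k X ⊗[k] FN k X) →ₗ[k] (FN k X ⊗[k] FN k X) :=
  TensorProduct.lift <| LinearMap.mk₂ k
    (fun a b => TensorProduct.map (d.mul a) (d.mul b))
    (fun a a' b => by simp only [map_add, TensorProduct.map_add_left])
    (fun c a b => by simp only [map_smul, TensorProduct.map_smul_left])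
    (fun a b b' => by simp only [map_add, TensorProduct.map_add_right])
    (fun c a b => by simp only [map_smul, TensorProduct.map_smul_right])

/-- A specification of the coproduct `Δ` on `FN(X)`: a `k`-linear map satisfying the
defining equations of the paper. These equations determine `Δ` uniquely.

* `delta_one`: `Δ(1) = 1 ⊗ 1`;
* `delta_var`: `Δ(x) = 1 ⊗ x` for `x ∈ X`;
* `delta_brk`: `Δ(⌊w⌋) = (id ⊗ N_X) Δ(w)` (the 1-cocycle condition on basis elements);
* `delta_split`: `Δ(w₁ ⋄ ⋯ ⋄ w_m) = Δ(w₁) ⋄ (Δ(w₂) ⋄ ⋯ ⋄ Δ(w_m))` for the alternating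
  `⋄`-factorization of a word into its letters, stated in its binary recursive form. -/
structure DeltaSpec (k : Type v) (X : Type u) [CommRing k] extends DiamondSpec k X where
  delta : FN k X →ₗ[k] FN k X ⊗[k] FN k X
  delta_one : delta (bw k one) = bw k one ⊗ₜ[k] bw k one
  delta_var : ∀ x : X, delta (bw k (varW x)) = bw k one ⊗ₜ[k] bw k (varW x)
  delta_brk : ∀ w : NW X,
    delta (Nop k (bw k w)) = LinearMap.lTensor (FN k X) (Nop k) (delta (bw k w))
  delta_split : ∀ (w : NW X) (a : Lt X) (rest : List (Lt X))
      (ha : GoodW [a]) (hrest : GoodW rest), w.1 = a :: rest → rest ≠ [] →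
      delta (bw k w) =
        mul2 k toDiamondSpec (delta (bw k ⟨[a], ha⟩)) (delta (bw k ⟨rest, hrest⟩))

/-- The product `w₁ ⋄ w₂ ⋄ ⋯ ⋄ w_m ∈ FN(X)` of a sequence of letters from `X ⊔ ⌊𝔛_∞⌋`
(the empty product being `1`). -/
def prodOf (d : DiamondSpec k X) : (l : List (Lt X)) → (∀ a ∈ l, GoodL a) → FN k X
  | [], _ => bw k one
  | a :: rest, h =>
      d.mul (bw k (letterW a (h a (List.mem_cons_self (a := a) (l := rest)))))
        (prodOf d rest (fun b hb => h b (List.mem_cons_of_mem a hb)))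

mutual
  /-- The degree of a letter: `deg(x) = 1` for `x ∈ X`, `deg(⌊u⌋) = 1 + deg(u)`. -/
  def degL : Lt X → ℕ
    | Lt.var _ => 1
    | Lt.brk u => 1 + degList u
  /-- The degree of a bracketed word: the total number of occurrences of elements of `X`
  and of brackets `⌊·⌋` in it. -/
  def degList : List (Lt X) → ℕ
    | [] => 0
    | a :: rest => degL a + degList rest
end

/-- The homogeneous component `FN^(n)`: the `k`-span of the basis words of degree `n`. -/
def FNdeg (n : ℕ) : Submodule k (FN k X) :=
  Submodule.span k {f | ∃ w : NW X, degList w.1 = n ∧ f = bw k w}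

/-- The image `A ⊗ B` of the tensor product of two submodules inside `M ⊗ M`. -/
def tsub {M : Type w} [AddCommGroup M] [Module k M] (A B : Submodule k M) :
    Submodule k (M ⊗[k] M) :=
  Submodule.span k {x | ∃ a ∈ A, ∃ b ∈ B, x = a ⊗ₜ[k] b}

/-! By bilinearity it suffices to show that `u ⋄ v` is homogeneous of degree `deg u + deg v` for
basis words `u, v`, by strong induction on that degree. If the last letter of `u` and the first
letter of `v` are not both brackets, `u ⋄ v` is the concatenation `uv`. Otherwise
`u = u₀⌊ā⌋`, `v = ⌊b̄⌋v₀` and `u ⋄ v = u₀ (⌊ā⌋ ⋄ ⌊b̄⌋) v₀`, and the Nijenhuis relation writes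
`⌊ā⌋ ⋄ ⌊b̄⌋` as brackets of products of smaller total degree, each bracket adding one to the
degree. -/

lemma degList_append (l₁ l₂ : List (Lt X)) :
    degList (l₁ ++ l₂) = degList l₁ + degList l₂ := by
  induction l₁ with
  | nil => simp [degList]
  | cons a t ih => simp only [List.cons_append, degList, ih]; omega

lemma degList_NopW (w : NW X) : degList (NopW w).1 = degList w.1 + 1 := by
  simp only [NopW, degList, degL]
  omega

lemma altP_of_altP_brk {x y : Lt X} {l : List (Lt X)} (h : altP x (Lt.brk l)) : altP x y := by
  cases x <;> cases y <;> trivial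

lemma altP_of_brk_altP {x y : Lt X} {l : List (Lt X)} (h : altP (Lt.brk l) y) : altP x y := by
  cases x <;> cases y <;> trivial

lemma altP_of_not_brk_brk {l₁ l₂ : List (Lt X)}
    (h : ¬ ∃ a b, l₁.getLast? = some (Lt.brk a) ∧ l₂.head? = some (Lt.brk b)) :
    ∀ x ∈ l₁.getLast?, ∀ y ∈ l₂.head?, altP x y := by
  intro x hx y hy
  cases x <;> cases y <;> first | trivial | exact h ⟨_, _, hx, hy⟩

lemma goodW_of_brk_mem {w : NW X} {a : List (Lt X)} (h : Lt.brk a ∈ w.1) : GoodW a := by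
  cases w.2.1 _ h with
  | brk _ h₁ h₂ => exact ⟨h₁, h₂⟩

lemma GoodW.append {l₁ l₂ : List (Lt X)} (h₁ : GoodW l₁) (h₂ : GoodW l₂)
    (h : ∀ x ∈ l₁.getLast?, ∀ y ∈ l₂.head?, altP x y) : GoodW (l₁ ++ l₂) :=
  ⟨fun a ha => (List.mem_append.mp ha).elim (h₁.1 a) (h₂.1 a), h₁.2.append h₂.2 h⟩

/-- Inside an alternating word, the neighbours of a bracket are not brackets, so any good word
may be substituted for the bracket. -/
lemma goodW_substitute {u₀ v₀ a b : List (Lt X)} (hu : GoodW (u₀ ++ [Lt.brk a]))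
    (hv : GoodW (Lt.brk b :: v₀)) (w : NW X) : GoodW (u₀ ++ w.1 ++ v₀) := by
  have hu₀ : GoodW u₀ :=
    ⟨fun c hc => hu.1 c (List.mem_append_left _ hc), hu.2.left_of_append⟩
  have hv₀ : GoodW v₀ :=
    ⟨fun c hc => hv.1 c (List.mem_cons_of_mem _ hc), hv.2.tail⟩
  refine (hu₀.append w.2 fun x hx y _ => ?_).append hv₀ fun x _ y hy => ?_
  · exact altP_of_altP_brk ((List.isChain_append.mp hu.2).2.2 x hx _ rfl)
  · exact altP_of_brk_altP ((List.isChain_cons.mp hv.2).1 y hy)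

section

variable (k : Type v) [CommRing k]

lemma iota_single (w : NW X) (c : k) :
    iota k (Finsupp.single w c) = MonoidAlgebra.single (FreeMonoid.ofList w.1) c := by
  simp [iota, Finsupp.lmapDomain_apply, Finsupp.mapDomain_single, MonoidAlgebra.ofCoeff_single]

lemma iota_bw (w : NW X) :
    iota k (bw k w) = MonoidAlgebra.single (FreeMonoid.ofList w.1) 1 :=
  iota_single k w 1

lemma iota_injective : Function.Injective (iota k (X := X)) := by
  intro f g h
  have hinj : Function.Injective (fun w : NW X => FreeMonoid.ofList w.1) :=
    fun _ _ hw => Subtype.ext (FreeMonoid.ofList.injective hw)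
  exact Finsupp.mapDomain_injective hinj (by simpa [iota, Finsupp.lmapDomain_apply] using h)

lemma iota_mapDomain_of_eq_append {u₀ v₀ : List (Lt X)} {g : NW X → NW X}
    (hg : ∀ w, (g w).1 = u₀ ++ w.1 ++ v₀) (f : FN k X) :
    iota k (Finsupp.mapDomain g f) =
      MonoidAlgebra.of k (FreeMonoid (Lt X)) (FreeMonoid.ofList u₀) * iota k f *
        MonoidAlgebra.of k (FreeMonoid (Lt X)) (FreeMonoid.ofList v₀) := by
  induction f using Finsupp.induction_linear with
  | zero => simp
  | add f₁ f₂ h₁ h₂ => simp only [Finsupp.mapDomain_add, map_add, mul_add, add_mul, h₁, h₂]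
  | single w c =>
      simp [Finsupp.mapDomain_single, iota_single, MonoidAlgebra.of_apply,
        MonoidAlgebra.single_mul_single, hg, FreeMonoid.ofList_append, mul_assoc]

lemma Nop_bw (w : NW X) : Nop k (bw k w) = bw k (NopW w) := by
  simp [Nop, bw, Finsupp.lmapDomain_apply, Finsupp.mapDomain_single]

lemma bw_mem_FNdeg {n : ℕ} {w : NW X} (h : degList w.1 = n) : bw k w ∈ FNdeg k n :=
  Submodule.subset_span ⟨w, h, rfl⟩

lemma mapDomain_mem_FNdeg {m n : ℕ} {g : NW X → NW X}
    (hg : ∀ w : NW X, degList w.1 = m → degList (g w).1 = n)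
    {f : FN k X} (hf : f ∈ FNdeg k m) : Finsupp.mapDomain g f ∈ FNdeg k n := by
  refine (Submodule.span_le (p := (FNdeg k n).comap (Finsupp.lmapDomain k k g))).mpr ?_ hf
  rintro _ ⟨w, hw, rfl⟩
  simpa [bw, Finsupp.mapDomain_single] using bw_mem_FNdeg k (hg w hw)

lemma Nop_mem_FNdeg {n : ℕ} {f : FN k X} (hf : f ∈ FNdeg k n) : Nop k f ∈ FNdeg k (n + 1) :=
  mapDomain_mem_FNdeg k (fun w hw => by rw [degList_NopW, hw]) hf

variable {k} (d : DiamondSpec k X)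

lemma mul_bw_eq_bw_of_eq_append {u v w : NW X} (hw : w.1 = u.1 ++ v.1)
    (h : ¬ ∃ a b, u.1.getLast? = some (Lt.brk a) ∧ v.1.head? = some (Lt.brk b)) :
    d.mul (bw k u) (bw k v) = bw k w := by
  apply iota_injective k
  rw [d.concat u v h, iota_bw, iota_bw, iota_bw, MonoidAlgebra.single_mul_single, mul_one, hw]
  rfl

lemma mul_bw_mem_FNdeg_of_split {u v A B : NW X} {u₀ v₀ : List (Lt X)}
    (hu : u.1 = u₀ ++ [Lt.brk A.1]) (hv : v.1 = Lt.brk B.1 :: v₀) {n : ℕ}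
    (h : d.mul (bw k (NopW A)) (bw k (NopW B)) ∈ FNdeg k n) :
    d.mul (bw k u) (bw k v) ∈ FNdeg k (degList u₀ + n + degList v₀) := by
  let g : NW X → NW X := fun w => ⟨u₀ ++ w.1 ++ v₀, goodW_substitute (hu ▸ u.2) (hv ▸ v.2) w⟩
  have hsplit : d.mul (bw k u) (bw k v) =
      Finsupp.mapDomain g (d.mul (bw k (NopW A)) (bw k (NopW B))) := by
    apply iota_injective k
    rw [d.split u v u₀ v₀ _ _ (NopW A).2 (NopW B).2 hu hv,
      iota_mapDomain_of_eq_append k (fun _ => rfl)]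
    rfl
  rw [hsplit]
  exact mapDomain_mem_FNdeg k (fun w hw => by simp [g, degList_append, hw, add_assoc]) h

lemma mul_bw_mem_FNdeg (u v : NW X) :
    d.mul (bw k u) (bw k v) ∈ FNdeg k (degList u.1 + degList v.1) := by
  induction hn : degList u.1 + degList v.1 using Nat.strong_induction_on generalizing u v with
  | _ n ih =>
  by_cases hc : ∃ a b, u.1.getLast? = some (Lt.brk a) ∧ v.1.head? = some (Lt.brk b)
  · obtain ⟨a, b, hlast, hhead⟩ := hc
    obtain ⟨u₀, hu⟩ := List.getLast?_eq_some_iff.mp hlast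
    obtain ⟨v₀, hv⟩ := List.head?_eq_some_iff.mp hhead
    obtain ⟨A, rfl⟩ : ∃ A : NW X, A.1 = a := ⟨⟨a, goodW_of_brk_mem (w := u) (by simp [hu])⟩, rfl⟩
    obtain ⟨B, rfl⟩ : ∃ B : NW X, B.1 = b := ⟨⟨b, goodW_of_brk_mem (w := v) (by simp [hv])⟩, rfl⟩
    have hdeg : n = degList u₀ + (degList A.1 + degList B.1 + 1 + 1) + degList v₀ := by
      rw [← hn, hu, hv]; simp only [degList_append, degList, degL]; omega
    -- the bracket rule `brkbrk` only involves products of smaller total degree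
    have hAB : d.mul (bw k (NopW A)) (bw k (NopW B)) ∈
        FNdeg k (degList A.1 + degList B.1 + 1 + 1) := by
      rw [← Nop_bw, ← Nop_bw, d.brkbrk]
      simp only [Nop_bw]
      refine sub_mem (add_mem (Nop_mem_FNdeg k ?_) (Nop_mem_FNdeg k ?_))
        (Nop_mem_FNdeg k (Nop_mem_FNdeg k ?_)) <;>
      exact ih _ (by omega) _ _ (by have := degList_NopW A; have := degList_NopW B; omega)
    rw [hdeg]
    exact mul_bw_mem_FNdeg_of_split d hu hv hAB
  · let w : NW X := ⟨u.1 ++ v.1, u.2.append v.2 (altP_of_not_brk_brk hc)⟩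
    rw [mul_bw_eq_bw_of_eq_append d (w := w) rfl hc, ← hn]
    exact bw_mem_FNdeg k (degList_append _ _)

end

/-- the product `⋄` respects the grading of `FN(X)` by degree:
`FN^(p) ⋄ FN^(q) ⊆ FN^(p+q)` for all `p, q ≥ 0`. -/
theorem stmt11_graded_mul (k : Type v) [CommRing k] {X : Type u}
    (d : DiamondSpec k X) (p q : ℕ) :
    ∀ a ∈ FNdeg k (X := X) p, ∀ b ∈ FNdeg k q, d.mul a b ∈ FNdeg k (p + q) := by
  intro a ha b hb
  refine ((Submodule.map₂_span_span k d.mul _ _).trans_le (Submodule.span_le.mpr ?_))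
    (Submodule.apply_mem_map₂ d.mul ha hb)
  rintro _ ⟨_, ⟨u, hu, rfl⟩, _, ⟨v, hv, rfl⟩, rfl⟩
  simpa [hu, hv] using mul_bw_mem_FNdeg d u v

end

end Nij
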